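/- Let a, c, b2 ∈ ℂ be nonzero and b1 ∈ ℂ with b1 ≠ b2 and b1 ≠ −2b2. Then the polynomial P(X) = a^6(b2 X − b1)^6 − c^6(X^3 − 3X + 2) has at least two distinct complex roots; equivalently, P(X) is not of the form a^6 b2^6 (X − r)^6 for any r ∈ ℂ. -/

import Mathlib

/-!
Over an algebraically closed field a polynomial with a single root is `lc * (X - r) ^ deg`, so it
suffices to rule out `P = u (X - r) ^ 6`. Writing `b2 X - b1 = b2 (X - b1 / b2)`, the cubic part of
`P` cannot affect the coefficients of `X ^ 6` and `X ^ 5`, which force `r = b1 / b2`. Evaluating at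
`r` leaves `c ^ 6 (r ^ 3 - 3 r + 2) = 0`, and `X ^ 3 - 3 X + 2 = (X - 1) ^ 2 (X + 2)` gives
`b1 = b2` or `b1 = -2 b2`.
-/

open Polynomial

namespace Polynomial

theorem coeff_X_sub_C_pow {R : Type*} [CommRing R] (r : R) (n k : ℕ) :
    ((X - C r) ^ n).coeff k = (-r) ^ (n - k) * n.choose k := by
  rw [sub_eq_add_neg, ← C_neg, coeff_X_add_C_pow]

theorem eq_of_C_mul_X_sub_C_pow_sub_eq {K : Type*} [Field K] [CharZero K] {u v s r : K} {n : ℕ}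
    {q : K[X]} (hu : u ≠ 0) (hq : q.natDegree < n)
    (h : C u * (X - C s) ^ (n + 1) - q = C v * (X - C r) ^ (n + 1)) : s = r := by
  have hlead := congrArg (coeff · (n + 1)) h
  have hnext := congrArg (coeff · n) h
  simp only [coeff_sub, coeff_C_mul, coeff_X_sub_C_pow, coeff_eq_zero_of_natDegree_lt hq,
    coeff_eq_zero_of_natDegree_lt (hq.trans n.lt_succ_self), tsub_self, add_tsub_cancel_left,
    Nat.choose_self, Nat.choose_succ_self_right, pow_zero, pow_one, Nat.cast_one, Nat.cast_add,
    mul_one, sub_zero, neg_mul, mul_neg, neg_inj] at hlead hnext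
  subst hlead
  exact mul_right_cancel₀ (Nat.cast_add_one_ne_zero n) (mul_left_cancel₀ hu hnext)

theorem exists_eq_C_leadingCoeff_mul_X_sub_C_pow {k : Type*} [Field k] [IsAlgClosed k] {p : k[X]}
    (h : ∀ x y, p.IsRoot x → p.IsRoot y → x = y) :
    ∃ r, p = C p.leadingCoeff * (X - C r) ^ p.natDegree := by
  obtain ⟨r, hr⟩ : ∃ r, ∀ s ∈ p.roots, s = r := by
    rcases Multiset.empty_or_exists_mem p.roots with h0 | ⟨r, hr⟩
    · exact ⟨0, by simp [h0]⟩
    · exact ⟨r, fun s hs => h s r (mem_roots'.1 hs).2 (mem_roots'.1 hr).2⟩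
  have hroots : p.roots = Multiset.replicate p.natDegree r :=
    Multiset.eq_replicate.2 ⟨IsAlgClosed.card_roots_eq_natDegree, hr⟩
  have hfactor :=
    C_leadingCoeff_mul_prod_multiset_X_sub_C (IsAlgClosed.card_roots_eq_natDegree (p := p))
  rw [hroots, Multiset.map_replicate, Multiset.prod_replicate] at hfactor
  exact ⟨r, hfactor.symm⟩

end Polynomial

theorem eq_one_or_eq_neg_two_of_cubic {R : Type*} [CommRing R] [IsDomain R] {r : R}
    (h : r ^ 3 - 3 * r + 2 = 0) : r = 1 ∨ r = -2 := by
  have hfactor : (r - 1) ^ 2 * (r + 2) = 0 := by linear_combination h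
  rcases mul_eq_zero.1 hfactor with h1 | h2
  · exact Or.inl (sub_eq_zero.1 (pow_eq_zero_iff two_ne_zero |>.1 h1))
  · exact Or.inr (eq_neg_of_add_eq_zero_left h2)

theorem sextic_ne_C_mul_X_sub_C_pow {K : Type*} [Field K] [CharZero K] {a c b2 b1 : K}
    (ha : a ≠ 0) (hc : c ≠ 0) (hb2 : b2 ≠ 0) (hb : b1 ≠ b2) (hb' : b1 ≠ -2 * b2) (u r : K) :
    C (a ^ 6) * (C b2 * X - C b1) ^ 6 - C (c ^ 6) * (X ^ 3 - 3 * X + 2) ≠ C u * (X - C r) ^ 6 := by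
  intro h
  have hlinear : C b2 * X - C b1 = C b2 * (X - C (b1 / b2)) := by
    rw [mul_sub, ← C_mul, mul_div_cancel₀ _ hb2]
  rw [hlinear, mul_pow, ← mul_assoc, ← C_pow, ← C_mul] at h
  have hs : b1 / b2 = r :=
    eq_of_C_mul_X_sub_C_pow_sub_eq (n := 5) (by positivity) (by compute_degree!) h
  have hcubic : c ^ 6 * (r ^ 3 - 3 * r + 2) = 0 := by
    simpa [← hs] using congrArg (eval r) h
  rcases eq_one_or_eq_neg_two_of_cubic ((mul_eq_zero.1 hcubic).resolve_left (pow_ne_zero 6 hc))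
    with h1 | h2
  · exact hb (by rwa [← hs, div_eq_iff hb2, one_mul] at h1)
  · exact hb' (by rwa [← hs, div_eq_iff hb2] at h2)

theorem stmt_16 (a c b2 b1 : ℂ) (ha : a ≠ 0) (hc : c ≠ 0) (hb2 : b2 ≠ 0)
    (hb : b1 ≠ b2) (hb' : b1 ≠ -2 * b2) :
    (∃ r1 r2 : ℂ, r1 ≠ r2 ∧
      (C (a ^ 6) * (C b2 * X - C b1) ^ 6 - C (c ^ 6) * (X ^ 3 - 3 * X + 2)
        : ℂ[X]).eval r1 = 0 ∧
      (C (a ^ 6) * (C b2 * X - C b1) ^ 6 - C (c ^ 6) * (X ^ 3 - 3 * X + 2)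
        : ℂ[X]).eval r2 = 0) ∧
    ¬∃ r : ℂ, (C (a ^ 6) * (C b2 * X - C b1) ^ 6 - C (c ^ 6) * (X ^ 3 - 3 * X + 2)
        : ℂ[X]) = C (a ^ 6 * b2 ^ 6) * (X - C r) ^ 6 := by
  have hP := sextic_ne_C_mul_X_sub_C_pow ha hc hb2 hb hb'
  refine ⟨?_, fun ⟨r, hr⟩ => hP _ r hr⟩
  by_contra! hroot
  obtain ⟨r, hr⟩ := exists_eq_C_leadingCoeff_mul_X_sub_C_pow
    fun x y hx hy => by_contra fun hxy => hroot x y hxy hx hy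
  have hdeg : (C (a ^ 6) * (C b2 * X - C b1) ^ 6 - C (c ^ 6) * (X ^ 3 - 3 * X + 2)
      : ℂ[X]).natDegree = 6 := by
    compute_degree!
  exact hP _ r (hdeg ▸ hr)
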